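/- Let 𝔯 be a complete, separated, right linear topological ring such that every simple discrete right 𝔯-module admits a projective cover in the category of all right 𝔯-modules. Let H = H(𝔯) be the abstract Jacobson radical and 𝔥 = 𝔥(𝔯) the topological Jacobson radical of 𝔯, and let M be a finitely generated discrete right 𝔯-module. Then rad(M) = MH = M𝔥 and the quotient module M/rad(M) is semisimple, where rad(M) denotes the intersection of all maximal submodules of M. -/

import Mathlib

open Filter MulOpposite

universe u

/-- The corner ring `eRe` of an idempotent `e` is a local ring: `e` is idempotent, nonzero,
and every element `exe` of the corner ring is invertible in `eRe` (with unit `e`),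
or `e - exe` is. -/
def IsLocalIdempotent {R : Type*} [Ring R] (e : R) : Prop :=
  IsIdempotentElem e ∧ e ≠ 0 ∧
    ∀ x : R,
      (∃ y : R, e * x * e * (e * y * e) = e ∧ e * y * e * (e * x * e) = e) ∨
      (∃ y : R, (e - e * x * e) * (e * y * e) = e ∧ e * y * e * (e - e * x * e) = e)

/-- Open right ideals form a base of neighborhoods of zero. -/
def IsRightLinearTopology (R : Type u) [Ring R] [TopologicalSpace R] : Prop :=
  ∀ s ∈ nhds (0 : R), ∃ I : Submodule Rᵐᵒᵖ R, IsOpen (I : Set R) ∧ (I : Set R) ⊆ s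

/-- A topological ring is topologically semiperfect if there is a zero-convergent family of
pairwise orthogonal local idempotents summing to `1`. -/
def IsTopSemiperfect (R : Type u) [Ring R] [TopologicalSpace R] : Prop :=
  ∃ (Z : Type u) (e : Z → R),
    Filter.Tendsto e Filter.cofinite (nhds 0) ∧
    (∀ z, IsLocalIdempotent (e z)) ∧
    (∀ z w, z ≠ w → e z * e w = 0) ∧
    HasSum e 1

/-- The topological Jacobson radical: the intersection of all open maximal right ideals. -/
def topJacobson (R : Type u) [Ring R] [TopologicalSpace R] : Set R :=
  ⋂ I ∈ {I : Submodule Rᵐᵒᵖ R | IsOpen (I : Set R) ∧ IsCoatom I}, (I : Set R)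

/-- The abstract Jacobson radical: the intersection of all maximal right ideals. -/
def absJacobson (R : Type u) [Ring R] : Set R :=
  ⋂ I ∈ {I : Submodule Rᵐᵒᵖ R | IsCoatom I}, (I : Set R)

/-- A right module is discrete if the annihilator of each element is open. -/
def IsDiscreteModule (R : Type u) [Ring R] [TopologicalSpace R]
    (N : Type u) [AddCommGroup N] [Module Rᵐᵒᵖ N] : Prop :=
  ∀ n : N, IsOpen {r : R | op r • n = 0}

/-- `N` has a projective cover in the category of all `R₀`-modules. -/
def HasProjCover (R₀ : Type u) [Ring R₀] (N : Type u) [AddCommGroup N] [Module R₀ N] : Prop :=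
  ∃ (P : Type u) (_ : AddCommGroup P) (_ : Module R₀ P) (p : P →ₗ[R₀] N),
    Module.Projective R₀ P ∧ Function.Surjective p ∧
      ∀ K : Submodule R₀ P, K ⊔ LinearMap.ker p = ⊤ → K = ⊤

/-- The finite topology on `End_A(M)^op`: the topology of pointwise convergence,
`M` being discrete; a base of neighborhoods of zero is given by the annihilators of
finite subsets of `M`. -/
def finiteTopologyEnd (A M : Type u) [Ring A] [AddCommGroup M] [Module A M] :
    TopologicalSpace (Module.End A M)ᵐᵒᵖ :=
  TopologicalSpace.induced (fun f (m : M) => f.unop m)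
    (@Pi.topologicalSpace M (fun _ => M) (fun _ => ⊥))

/-- The topological Jacobson radical, as an additive subgroup. -/
def topJacobsonAddSubgroup (R : Type u) [Ring R] [TopologicalSpace R] : AddSubgroup R :=
  ⨅ I ∈ {I : Submodule Rᵐᵒᵖ R | IsOpen (I : Set R) ∧ IsCoatom I}, I.toAddSubgroup
section Aux

variable {R : Type u} [Ring R]

/-- Right multiplication-action on a right module, as a linear map `R →ₗ[Rᵐᵒᵖ] N`. -/
def smulBy {N : Type*} [AddCommGroup N] [Module Rᵐᵒᵖ N] (x : N) : R →ₗ[Rᵐᵒᵖ] N where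
  toFun r := op r • x
  map_add' a b := by
    show op (a + b) • x = op a • x + op b • x
    rw [op_add, add_smul]
  map_smul' s r := by
    show op (s • r) • x = s • op r • x
    induction s using MulOpposite.rec' with
    | h t => rw [op_smul_eq_mul, op_mul, mul_smul]

@[simp] lemma smulBy_apply {N : Type*} [AddCommGroup N] [Module Rᵐᵒᵖ N] (x : N) (r : R) :
    smulBy x r = op r • x := rfl

/-- `unop` of the `i`-th coordinate, as a linear map. -/
def unopProj {n : ℕ} (i : Fin n) : (Fin n → Rᵐᵒᵖ) →ₗ[Rᵐᵒᵖ] R where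
  toFun v := unop (v i)
  map_add' a b := by simp
  map_smul' s v := by
    simp only [Pi.smul_apply, smul_eq_mul, unop_mul, RingHom.id_apply]
    conv_rhs => rw [← op_unop s, op_smul_eq_mul]

lemma unopProj_surjective {n : ℕ} (i : Fin n) :
    Function.Surjective (unopProj (R := R) i) := fun r =>
  ⟨Pi.single i (op r), by simp [unopProj]⟩

lemma comap_isCoatom {A B : Type*} [AddCommGroup A] [AddCommGroup B]
    [Module Rᵐᵒᵖ A] [Module Rᵐᵒᵖ B] (f : A →ₗ[Rᵐᵒᵖ] B) (hf : Function.Surjective f)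
    {I : Submodule Rᵐᵒᵖ B} (hI : IsCoatom I) : IsCoatom (Submodule.comap f I) := by
  constructor
  · intro h
    apply hI.1
    have h2 := Submodule.map_comap_eq_of_surjective hf I
    rw [h, Submodule.map_top, LinearMap.range_eq_top.2 hf] at h2
    exact h2.symm
  · intro U hU
    have h1 : Submodule.map f U ≠ I := by
      intro h
      exact (not_le_of_gt hU) (h ▸ Submodule.le_comap_map f U)
    have h2 : I ≤ Submodule.map f U := by
      conv_lhs => rw [← Submodule.map_comap_eq_of_surjective hf I]
      exact Submodule.map_mono hU.le
    have h3 : Submodule.map f U = ⊤ := hI.2 _ (lt_of_le_of_ne h2 (Ne.symm h1))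
    rw [eq_top_iff]
    intro x _
    have : f x ∈ Submodule.map f U := h3 ▸ Submodule.mem_top
    obtain ⟨y, hy, hyx⟩ := this
    have hxy : x - y ∈ Submodule.comap f I := by
      simp only [Submodule.mem_comap, map_sub, hyx, sub_self]
      exact I.zero_mem
    have : x = y + (x - y) := by abel
    rw [this]
    exact U.add_mem hy (hU.le hxy)

lemma mem_absJacobson_iff {h : R} :
    h ∈ absJacobson R ↔ ∀ I : Submodule Rᵐᵒᵖ R, IsCoatom I → h ∈ I := by
  simp [absJacobson]

lemma absJacobson_subset_topJacobson [TopologicalSpace R] :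
    absJacobson R ⊆ topJacobson R := by
  intro h hh
  simp only [topJacobson, Set.mem_iInter, Set.mem_setOf_eq, SetLike.mem_coe]
  rintro I ⟨-, hco⟩
  exact mem_absJacobson_iff.mp hh I hco

lemma IsDiscreteModule.quotient [TopologicalSpace R] [IsTopologicalAddGroup R]
    {M : Type u} [AddCommGroup M] [Module Rᵐᵒᵖ M]
    (hdisc : IsDiscreteModule R M) (K : Submodule Rᵐᵒᵖ M) :
    IsDiscreteModule R (M ⧸ K) := by
  intro nq
  obtain ⟨m, rfl⟩ := Submodule.Quotient.mk_surjective K nq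
  have hU : IsOpen {r : R | op r • m = 0} := hdisc m
  have hset : {r : R | op r • (Submodule.Quotient.mk m : M ⧸ K) = 0}
      = ⋃ a ∈ {r : R | op r • (Submodule.Quotient.mk m : M ⧸ K) = 0},
          (a + ·) '' {r : R | op r • m = 0} := by
    ext r
    simp only [Set.mem_iUnion, Set.mem_image, Set.mem_setOf_eq, exists_prop]
    constructor
    · intro hr
      exact ⟨r, hr, 0, by simp, by simp⟩
    · rintro ⟨a, ha, u, hu, rfl⟩
      have : op (a + u) • (Submodule.Quotient.mk m : M ⧸ K)
          = op a • (Submodule.Quotient.mk m : M ⧸ K)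
            + op u • (Submodule.Quotient.mk m : M ⧸ K) := by
        rw [op_add, add_smul]
      rw [this, ha, ← Submodule.Quotient.mk_smul, hu]
      simp
  rw [hset]
  exact isOpen_biUnion fun a _ => (isOpenMap_add_left a) _ hU

/-- The annihilator of a nonzero element of a simple module is a maximal right ideal. -/
lemma isCoatom_ker_smulBy {N : Type u} [AddCommGroup N] [Module Rᵐᵒᵖ N]
    [IsSimpleModule Rᵐᵒᵖ N] {x : N} (hx : x ≠ 0) :
    IsCoatom (LinearMap.ker (smulBy (R := R) x)) := by
  have hsurj : Function.Surjective (smulBy (R := R) x) := by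
    rw [← LinearMap.range_eq_top]
    rcases eq_bot_or_eq_top (LinearMap.range (smulBy (R := R) x)) with h | h
    · exfalso
      apply hx
      have : smulBy (R := R) x 1 ∈ LinearMap.range (smulBy (R := R) x) :=
        LinearMap.mem_range_self _ 1
      rw [h, Submodule.mem_bot] at this
      simpa using this
    · exact h
  have : IsSimpleModule Rᵐᵒᵖ (R ⧸ LinearMap.ker (smulBy (R := R) x)) :=
    IsSimpleModule.congr (LinearMap.quotKerEquivOfSurjective _ hsurj)
  exact isSimpleModule_iff_isCoatom.mp this

end Aux

section Key

variable {R : Type u} [Ring R]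

/-- Superfluous submodules transfer along a split surjection. -/
lemma sml_transfer {F P : Type*} [AddCommGroup F] [AddCommGroup P]
    [Module Rᵐᵒᵖ F] [Module Rᵐᵒᵖ P] (ψ : F →ₗ[Rᵐᵒᵖ] P) (σ : P →ₗ[Rᵐᵒᵖ] F)
    (hσψ : ∀ x, ψ (σ x) = x) {K : Submodule Rᵐᵒᵖ P}
    (hK : ∀ N : Submodule Rᵐᵒᵖ P, N ⊔ K = ⊤ → N = ⊤)
    (N : Submodule Rᵐᵒᵖ F) (hN : N ⊔ Submodule.map σ K = ⊤) : N = ⊤ := by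
  have hcomp : ψ.comp σ = LinearMap.id := by ext x; simp [hσψ]
  set Q := LinearMap.range σ with hQ
  have hQK : Submodule.map σ K ≤ Q := by
    rw [hQ, ← Submodule.map_top σ]
    exact Submodule.map_mono le_top
  have h1 : Submodule.map σ K ⊔ (N ⊓ Q) = Q := by
    rw [← sup_inf_assoc_of_le N hQK, sup_comm, hN, top_inf_eq]
  have hmapQ : Submodule.map ψ Q = ⊤ := by
    rw [hQ, ← LinearMap.range_comp, hcomp, LinearMap.range_id]
  have h2 : K ⊔ Submodule.map ψ (N ⊓ Q) = ⊤ := by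
    have := congrArg (Submodule.map ψ) h1
    rwa [Submodule.map_sup, ← Submodule.map_comp, hcomp, Submodule.map_id, hmapQ] at this
  have h3 : Submodule.map ψ (N ⊓ Q) = ⊤ := hK _ (by rwa [sup_comm] at h2)
  have h4 : Q ≤ N := by
    rintro x ⟨a, rfl⟩
    have ha : a ∈ Submodule.map ψ (N ⊓ Q) := h3 ▸ Submodule.mem_top
    obtain ⟨y, hy, hya⟩ := ha
    obtain ⟨b, rfl⟩ := hy.2
    rw [hσψ] at hya
    rw [← hya]
    exact hy.1
  rw [← hN, eq_comm, sup_eq_left]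
  exact le_trans hQK h4

/-- The key lemma: a finitely generated discrete module annihilated by the
(abstract) Jacobson radical is semisimple, provided all simple discrete modules
have projective covers. -/
theorem key_semisimple [TopologicalSpace R] [IsTopologicalAddGroup R]
    (hcov : ∀ (S : Type u) [AddCommGroup S] [Module Rᵐᵒᵖ S],
      IsSimpleModule Rᵐᵒᵖ S → IsDiscreteModule R S → HasProjCover Rᵐᵒᵖ S)
    (M : Type u) [AddCommGroup M] [Module Rᵐᵒᵖ M]
    (hfg : Module.Finite Rᵐᵒᵖ M) (hdisc : IsDiscreteModule R M)
    (hH : ∀ (x : M) (h : R), h ∈ absJacobson R → op h • x = 0) :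
    IsSemisimpleModule Rᵐᵒᵖ M := by
  classical
  by_cases hsup : sSup {T : Submodule Rᵐᵒᵖ M | IsSimpleModule Rᵐᵒᵖ T} = ⊤
  · exact IsSemisimpleModule.of_sSup_simples_eq_top hsup
  exfalso
  haveI : IsCoatomic (Submodule Rᵐᵒᵖ M) :=
    CompleteLattice.coatomic_of_top_compact ((Submodule.fg_iff_compact _).mp hfg.fg_top)
  obtain ⟨mm, hmm, hSm⟩ :=
    (eq_top_or_exists_le_coatom
      (sSup {T : Submodule Rᵐᵒᵖ M | IsSimpleModule Rᵐᵒᵖ T})).resolve_left hsup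
  haveI hS : IsSimpleModule Rᵐᵒᵖ (M ⧸ mm) := isSimpleModule_iff_isCoatom.mpr hmm
  obtain ⟨P, _, _, p, hproj, hpsurj, hker⟩ :=
    hcov (M ⧸ mm) hS (hdisc.quotient mm)
  obtain ⟨n, π, hπ⟩ := Module.Finite.exists_fin' Rᵐᵒᵖ M
  haveI : Module.Projective Rᵐᵒᵖ (Fin n → Rᵐᵒᵖ) :=
    Module.Projective.of_basis (Pi.basisFun Rᵐᵒᵖ (Fin n))
  set q : (Fin n → Rᵐᵒᵖ) →ₗ[Rᵐᵒᵖ] (M ⧸ mm) := mm.mkQ.comp π with hq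
  have hqsurj : Function.Surjective q := (mm.mkQ_surjective).comp hπ
  obtain ⟨ψ, hψ⟩ := Module.projective_lifting_property p q hpsurj
  have hψsurj : Function.Surjective ψ := by
    rw [← LinearMap.range_eq_top]
    apply hker
    rw [eq_top_iff]
    intro x _
    have h1 : p x ∈ Submodule.map p (LinearMap.range ψ) := by
      have hr : Submodule.map p (LinearMap.range ψ) = LinearMap.range q := by
        rw [← hψ, LinearMap.range_comp]
      rw [hr, LinearMap.range_eq_top.mpr hqsurj]
      exact Submodule.mem_top
    obtain ⟨y, hy, hyx⟩ := h1
    refine Submodule.mem_sup.mpr ⟨y, hy, x - y, ?_, by abel⟩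
    rw [LinearMap.mem_ker, map_sub, hyx, sub_self]
  obtain ⟨σ, hσ⟩ := Module.projective_lifting_property ψ (LinearMap.id) hψsurj
  have hσψ : ∀ x, ψ (σ x) = x := fun x => by
    have := LinearMap.ext_iff.mp hσ x
    simpa using this
  set θ : P →ₗ[Rᵐᵒᵖ] M := π.comp σ with hθ
  have hpθ : ∀ x, mm.mkQ (θ x) = p x := by
    intro x
    have h1 : q (σ x) = p (ψ (σ x)) := (LinearMap.ext_iff.mp hψ (σ x)).symm
    rw [hσψ] at h1
    simpa [hθ, hq] using h1
  -- σ (ker p) is contained in every coatom of the free module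
  have hsml : ∀ c : Submodule Rᵐᵒᵖ (Fin n → Rᵐᵒᵖ), IsCoatom c →
      Submodule.map σ (LinearMap.ker p) ≤ c := by
    intro c hc
    by_contra hle
    apply hc.1
    apply sml_transfer ψ σ hσψ hker
    apply hc.2
    refine lt_of_le_of_ne le_sup_left fun h => hle ?_
    conv_rhs => rw [h]
    exact le_sup_right
  -- hence every coordinate of σ x, for x ∈ ker p, lies in the Jacobson radical
  have habs : ∀ x ∈ LinearMap.ker p, ∀ i : Fin n, unop (σ x i) ∈ absJacobson R := by
    intro x hx i
    rw [mem_absJacobson_iff]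
    intro I hI
    have hco : IsCoatom (Submodule.comap (unopProj (R := R) i) I) :=
      comap_isCoatom _ (unopProj_surjective i) hI
    have := hsml _ hco (Submodule.mem_map_of_mem (f := σ) hx)
    simpa [unopProj] using this
  -- θ kills ker p
  have hθker : ∀ x ∈ LinearMap.ker p, θ x = 0 := by
    intro x hx
    have hdecomp : θ x = ∑ i, (σ x i) • π (Pi.single i 1) := by
      have hv : (σ x) = ∑ i, (σ x i) • Pi.single i (1 : Rᵐᵒᵖ) := by
        funext j
        simp [Pi.single_apply, Finset.sum_ite_eq']
      rw [hθ]
      simp only [LinearMap.comp_apply]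
      conv_lhs => rw [hv]
      rw [map_sum]
      exact Finset.sum_congr rfl fun i _ => by rw [map_smul]
    rw [hdecomp]
    refine Finset.sum_eq_zero fun i _ => ?_
    have : (σ x i) = op (unop (σ x i)) := by simp
    rw [this]
    exact hH _ _ (habs x hx i)
  -- ker θ = ker p
  have hkereq : LinearMap.ker θ = LinearMap.ker p := by
    apply le_antisymm
    · intro x hx
      rw [LinearMap.mem_ker] at hx ⊢
      rw [← hpθ x, hx, map_zero]
    · intro x hx
      rw [LinearMap.mem_ker]
      exact hθker x hx
  -- range θ is simple
  haveI h1 : IsSimpleModule Rᵐᵒᵖ (P ⧸ LinearMap.ker p) :=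
    IsSimpleModule.congr (p.quotKerEquivOfSurjective hpsurj)
  haveI h2 : IsSimpleModule Rᵐᵒᵖ (P ⧸ LinearMap.ker θ) := by rw [hkereq]; exact h1
  haveI h3 : IsSimpleModule Rᵐᵒᵖ (LinearMap.range θ) :=
    IsSimpleModule.congr (θ.quotKerEquivRange).symm
  -- range θ is contained in mm
  have h4 : LinearMap.range θ ≤ mm :=
    le_trans (le_sSup (by exact h3)) hSm
  -- but θ composed with mkQ is surjective
  have h5 : Submodule.map mm.mkQ (LinearMap.range θ) = ⊤ := by
    have hrc : Submodule.map mm.mkQ (LinearMap.range θ) = LinearMap.range (mm.mkQ.comp θ) :=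
      (LinearMap.range_comp θ mm.mkQ).symm
    rw [hrc, LinearMap.range_eq_top]
    intro s
    obtain ⟨x, hx⟩ := hpsurj s
    exact ⟨x, by rw [LinearMap.comp_apply, hpθ, hx]⟩
  have h6 : Submodule.map mm.mkQ (LinearMap.range θ) = ⊥ := by
    rw [eq_bot_iff]
    rintro y ⟨x, hx, rfl⟩
    rw [Submodule.mem_bot, Submodule.mkQ_apply, Submodule.Quotient.mk_eq_zero]
    exact h4 hx
  rw [h5] at h6
  exact bot_ne_top h6.symm

end Key

section Main

variable {R : Type u} [Ring R]

lemma span_topJacobson_le_radical [TopologicalSpace R] [IsTopologicalAddGroup R]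
    {M : Type u} [AddCommGroup M] [Module Rᵐᵒᵖ M] (hdisc : IsDiscreteModule R M) :
    Submodule.span Rᵐᵒᵖ {x : M | ∃ m : M, ∃ h ∈ topJacobson R, x = op h • m}
      ≤ sInf {K : Submodule Rᵐᵒᵖ M | IsCoatom K} := by
  rw [Submodule.span_le]
  rintro x ⟨m, h, hh, rfl⟩
  rw [SetLike.mem_coe, Submodule.mem_sInf]
  intro K hK
  haveI : IsSimpleModule Rᵐᵒᵖ (M ⧸ K) := isSimpleModule_iff_isCoatom.mpr hK
  by_cases hm : (Submodule.Quotient.mk m : M ⧸ K) = 0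
  · exact K.smul_mem _ ((Submodule.Quotient.mk_eq_zero K).mp hm)
  · have hco : IsCoatom (LinearMap.ker (smulBy (R := R)
        (Submodule.Quotient.mk m : M ⧸ K))) := isCoatom_ker_smulBy hm
    have hopen : IsOpen ((LinearMap.ker (smulBy (R := R)
        (Submodule.Quotient.mk m : M ⧸ K))) : Set R) := by
      have h2 := (hdisc.quotient K) (Submodule.Quotient.mk m)
      convert h2 using 1
      ext r; simp [smulBy_apply]
    have hmem : h ∈ LinearMap.ker (smulBy (R := R)
        (Submodule.Quotient.mk m : M ⧸ K)) := by
      have := hh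
      simp only [topJacobson, Set.mem_iInter, Set.mem_setOf_eq, SetLike.mem_coe] at this
      exact this _ ⟨hopen, hco⟩
    rw [LinearMap.mem_ker, smulBy_apply, ← Submodule.Quotient.mk_smul,
      Submodule.Quotient.mk_eq_zero] at hmem
    exact hmem

lemma sInf_coatoms_eq_bot_of_semisimple {D : Type u} [AddCommGroup D] [Module Rᵐᵒᵖ D]
    (hfg : Module.Finite Rᵐᵒᵖ D) [IsSemisimpleModule Rᵐᵒᵖ D] :
    sInf {K : Submodule Rᵐᵒᵖ D | IsCoatom K} = ⊥ := by
  haveI : IsCoatomic (Submodule Rᵐᵒᵖ D) :=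
    CompleteLattice.coatomic_of_top_compact ((Submodule.fg_iff_compact _).mp hfg.fg_top)
  obtain ⟨C, hC⟩ := exists_isCompl (sInf {K : Submodule Rᵐᵒᵖ D | IsCoatom K})
  rcases eq_top_or_exists_le_coatom C with hC' | ⟨c, hc, hCc⟩
  · have := hC.inf_eq_bot
    rwa [hC', inf_top_eq] at this
  · exfalso
    apply hc.1
    rw [eq_top_iff, ← hC.sup_eq_top]
    exact sup_le (sInf_le hc) hCc

end Main


theorem radical_of_fg_discrete
    (R : Type u) [Ring R] [UniformSpace R] [IsUniformAddGroup R] [IsTopologicalRing R]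
    [T2Space R] [CompleteSpace R] (hRL : IsRightLinearTopology R)
    (hcov : ∀ (S : Type u) [AddCommGroup S] [Module Rᵐᵒᵖ S],
      IsSimpleModule Rᵐᵒᵖ S → IsDiscreteModule R S → HasProjCover Rᵐᵒᵖ S)
    (M : Type u) [AddCommGroup M] [Module Rᵐᵒᵖ M]
    (hfg : Module.Finite Rᵐᵒᵖ M) (hdisc : IsDiscreteModule R M) :
    sInf {K : Submodule Rᵐᵒᵖ M | IsCoatom K} =
        Submodule.span Rᵐᵒᵖ {x : M | ∃ m : M, ∃ h ∈ absJacobson R, x = op h • m} ∧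
    sInf {K : Submodule Rᵐᵒᵖ M | IsCoatom K} =
        Submodule.span Rᵐᵒᵖ {x : M | ∃ m : M, ∃ h ∈ topJacobson R, x = op h • m} ∧
    IsSemisimpleModule Rᵐᵒᵖ (M ⧸ sInf {K : Submodule Rᵐᵒᵖ M | IsCoatom K}) := by
  classical
  set WH : Submodule Rᵐᵒᵖ M :=
    Submodule.span Rᵐᵒᵖ {x : M | ∃ m : M, ∃ h ∈ absJacobson R, x = op h • m} with hWH
  set Wh : Submodule Rᵐᵒᵖ M :=
    Submodule.span Rᵐᵒᵖ {x : M | ∃ m : M, ∃ h ∈ topJacobson R, x = op h • m} with hWh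
  have hsub : WH ≤ Wh := by
    apply Submodule.span_mono
    rintro x ⟨m, h, hh, rfl⟩
    exact ⟨m, h, absJacobson_subset_topJacobson hh, rfl⟩
  have hWhle : Wh ≤ sInf {K : Submodule Rᵐᵒᵖ M | IsCoatom K} :=
    span_topJacobson_le_radical hdisc
  -- the quotient by WH is semisimple
  haveI hfgD : Module.Finite Rᵐᵒᵖ (M ⧸ WH) := Module.Finite.quotient Rᵐᵒᵖ WH
  have hHD : ∀ (d : M ⧸ WH) (h : R), h ∈ absJacobson R → op h • d = 0 := by
    intro d h hh
    obtain ⟨m, rfl⟩ := Submodule.Quotient.mk_surjective WH d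
    rw [← Submodule.Quotient.mk_smul, Submodule.Quotient.mk_eq_zero]
    exact Submodule.subset_span ⟨m, h, hh, rfl⟩
  haveI hss : IsSemisimpleModule Rᵐᵒᵖ (M ⧸ WH) :=
    key_semisimple hcov (M ⧸ WH) hfgD (hdisc.quotient WH) hHD
  have hbot : sInf {K : Submodule Rᵐᵒᵖ (M ⧸ WH) | IsCoatom K} = ⊥ :=
    sInf_coatoms_eq_bot_of_semisimple hfgD
  have hle : sInf {K : Submodule Rᵐᵒᵖ M | IsCoatom K} ≤ WH := by
    intro x hx
    have hmk : (Submodule.Quotient.mk x : M ⧸ WH)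
        ∈ sInf {K : Submodule Rᵐᵒᵖ (M ⧸ WH) | IsCoatom K} := by
      rw [Submodule.mem_sInf]
      intro K' hK'
      have hco : IsCoatom (Submodule.comap WH.mkQ K') :=
        comap_isCoatom _ WH.mkQ_surjective hK'
      exact (Submodule.mem_sInf.mp hx) _ hco
    rw [hbot, Submodule.mem_bot, Submodule.Quotient.mk_eq_zero] at hmk
    exact hmk
  have h1 : sInf {K : Submodule Rᵐᵒᵖ M | IsCoatom K} = WH :=
    le_antisymm hle (le_trans hsub hWhle)
  have h2 : sInf {K : Submodule Rᵐᵒᵖ M | IsCoatom K} = Wh :=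
    le_antisymm (le_trans hle hsub) hWhle
  refine ⟨h1, h2, ?_⟩
  rw [h1]
  exact hss
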